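/- The proximal operator of a tree-structured hierarchical group norm with two levels decomposes: let G₁ be a partition of {1,…,q} into groups, and let G₂ = {{1,…,q}} be the root group. Then for weights λ₁ (on each group of G₁) and λ₂ (on the root), the proximal operator of ψ(z) = λ₂‖z‖₂ + ∑_{g ∈ G₁} λ₁‖z_g‖₂ satisfies prox_ψ = π_{λ₂}^{root} ∘ π_{λ₁}^{G₁}, i.e., it is obtained by first applying group soft-thresholding with threshold λ₁ to each group of the partition, and then applying group soft-thresholding with threshold λ₂ to the whole resulting vector. -/

import Mathlib

open Finset

variable {q : ℕ} {ι : Type*} [Fintype ι] [DecidableEq ι]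

/-- Euclidean norm of the subvector of `z` supported on the group `g` of the partition
determined by the group-assignment map `grp`. -/
noncomputable def grpNorm (grp : Fin q → ι) (g : ι) (z : Fin q → ℝ) : ℝ :=
  Real.sqrt (∑ i ∈ univ.filter (fun i => grp i = g), (z i)^2)

/-- Group soft-thresholding with threshold `lam` applied to every group of the partition
determined by `grp`: on each group `g`, `z_g ↦ (z_g/‖z_g‖₂)·max{0, ‖z_g‖₂ − λ}` (fixing `0`). -/
noncomputable def groupST (grp : Fin q → ι) (lam : ℝ) (z : Fin q → ℝ) : Fin q → ℝ :=
  fun i =>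
    if grpNorm grp (grp i) z = 0 then 0
    else (max 0 (grpNorm grp (grp i) z - lam) / grpNorm grp (grp i) z) * z i

/-- Group soft-thresholding with threshold `lam` applied to the root group
`{1,…,q}` (the whole vector). -/
noncomputable def rootST (lam : ℝ) (z : Fin q → ℝ) : Fin q → ℝ :=
  fun i =>
    if Real.sqrt (∑ j, (z j)^2) = 0 then 0
    else (max 0 (Real.sqrt (∑ j, (z j)^2) - lam) / Real.sqrt (∑ j, (z j)^2)) * z i

/-- Two-level hierarchical group-norm objective at `u` with data `b`:
`(1/2)‖u − b‖₂² + λ₂‖u‖₂ + ∑_{g ∈ G₁} λ₁‖u_g‖₂`. -/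
noncomputable def hierObj (grp : Fin q → ι) (lam₁ lam₂ : ℝ) (b u : Fin q → ℝ) : ℝ :=
  (1/2) * ∑ i, (u i - b i)^2 + lam₂ * Real.sqrt (∑ i, (u i)^2) +
    ∑ g : ι, lam₁ * grpNorm grp g u

noncomputable def stCoef {α : Type*} (S : Finset α) (x : α → ℝ) (lam : ℝ) : ℝ :=
  if Real.sqrt (∑ i ∈ S, (x i)^2) = 0 then 0
  else max 0 (Real.sqrt (∑ i ∈ S, (x i)^2) - lam) / Real.sqrt (∑ i ∈ S, (x i)^2)

lemma stCoef_nonneg {α : Type*} (S : Finset α) (x : α → ℝ) (lam : ℝ) :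
    0 ≤ stCoef S x lam := by
  unfold stCoef
  split
  · exact le_refl 0
  · positivity

lemma core_ineq {α : Type*} (S : Finset α) (x u y z : α → ℝ) (lam c : ℝ)
    (hlam : 0 ≤ lam) (hc : 0 ≤ c)
    (hz : ∀ i ∈ S, z i = stCoef S x lam * x i)
    (hy : ∀ i ∈ S, y i = c * z i) :
    ∑ i ∈ S, (x i - z i) * (u i - y i) ≤
      lam * Real.sqrt (∑ i ∈ S, (u i)^2) - lam * Real.sqrt (∑ i ∈ S, (y i)^2) := by
  set M := Real.sqrt (∑ i ∈ S, (x i)^2) with hMdef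
  set U := Real.sqrt (∑ i ∈ S, (u i)^2) with hUdef
  have hM0 : 0 ≤ M := Real.sqrt_nonneg _
  have hU0 : 0 ≤ U := Real.sqrt_nonneg _
  have hM2 : ∑ i ∈ S, (x i)^2 = M^2 := by
    rw [hMdef, Real.sq_sqrt (Finset.sum_nonneg fun i _ => sq_nonneg _)]
  set e := stCoef S x lam with hedef
  have he0 : 0 ≤ e := stCoef_nonneg S x lam
  have hCS : ∑ i ∈ S, x i * u i ≤ M * U := Real.sum_mul_le_sqrt_mul_sqrt S x u
  have hLHS : ∑ i ∈ S, (x i - z i) * (u i - y i)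
      = (1 - e) * (∑ i ∈ S, x i * u i) - c * e * (1 - e) * M^2 := by
    rw [← hM2, Finset.mul_sum, Finset.mul_sum, ← Finset.sum_sub_distrib]
    refine Finset.sum_congr rfl fun i hi => ?_
    rw [hz i hi, hy i hi, hz i hi]; ring
  have hY : Real.sqrt (∑ i ∈ S, (y i)^2) = c * e * M := by
    have : ∑ i ∈ S, (y i)^2 = (c*e)^2 * ∑ i ∈ S, (x i)^2 := by
      rw [Finset.mul_sum]
      refine Finset.sum_congr rfl fun i hi => ?_
      rw [hy i hi, hz i hi]; ring
    rw [this, Real.sqrt_mul (sq_nonneg _), ← hMdef,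
      Real.sqrt_sq (mul_nonneg hc he0), mul_assoc]
  rw [hLHS, hY]
  set P := ∑ i ∈ S, x i * u i with hPdef
  rcases eq_or_lt_of_le hM0 with hMz | hMp
  · have hez : e = 0 := by rw [hedef]; unfold stCoef; rw [if_pos hMz.symm]
    rw [hez, ← hMz]
    have : P ≤ 0 := by simpa using hCS.trans_eq (by rw [← hMz]; ring)
    nlinarith
  · have hMne : M ≠ 0 := ne_of_gt hMp
    rcases le_or_gt M lam with hMl | hMl
    · have hez : e = 0 := by
        rw [hedef]; unfold stCoef; rw [if_neg hMne, max_eq_left (by linarith), zero_div]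
      rw [hez]
      have h1 : P ≤ lam * U := hCS.trans (by nlinarith)
      nlinarith
    · have hee : e = (M - lam) / M := by
        rw [hedef]; unfold stCoef; rw [if_neg hMne, max_eq_right (by linarith)]
      have h1e : 1 - e = lam / M := by rw [hee]; field_simp; ring
      rw [h1e]
      have h2 : lam / M * P ≤ lam / M * (M * U) :=
        mul_le_mul_of_nonneg_left hCS (div_nonneg hlam hM0)
      have h3 : lam / M * (M * U) = lam * U := by field_simp
      have h4 : c * e * (lam / M) * M^2 = lam * (c * e * M) := by field_simp
      nlinarith

lemma groupST_eq (grp : Fin q → ι) (lam : ℝ) (z : Fin q → ℝ) (g : ι) (i : Fin q)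
    (h : grp i = g) :
    groupST grp lam z i = stCoef (univ.filter fun j => grp j = g) z lam * z i := by
  subst h
  simp only [groupST, stCoef]
  rw [grpNorm]
  split <;> simp

lemma rootST_eq (lam : ℝ) (z : Fin q → ℝ) (i : Fin q) :
    rootST lam z i = stCoef (univ : Finset (Fin q)) z lam * z i := by
  simp only [rootST, stCoef]
  split <;> simp

theorem key_ineq (grp : Fin q → ι) (lam₁ lam₂ : ℝ) (hlam₁ : 0 ≤ lam₁) (hlam₂ : 0 ≤ lam₂)
    (b u : Fin q → ℝ) :
    hierObj grp lam₁ lam₂ b (rootST lam₂ (groupST grp lam₁ b)) +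
      (1/2) * ∑ i, (u i - rootST lam₂ (groupST grp lam₁ b) i)^2 ≤
    hierObj grp lam₁ lam₂ b u := by
  set v := groupST grp lam₁ b with hvdef
  set w := rootST lam₂ v with hwdef
  have hw : ∀ i, w i = stCoef (univ : Finset (Fin q)) v lam₂ * v i := fun i =>
    rootST_eq lam₂ v i
  have hc : 0 ≤ stCoef (univ : Finset (Fin q)) v lam₂ := stCoef_nonneg _ _ _
  -- root inequality
  have hroot : ∑ i, (v i - w i) * (u i - w i) ≤
      lam₂ * Real.sqrt (∑ i, (u i)^2) - lam₂ * Real.sqrt (∑ i, (w i)^2) := by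
    refine core_ineq univ v u w w lam₂ 1 hlam₂ zero_le_one
      (fun i _ => hw i) (fun i _ => (one_mul _).symm)
  -- group inequalities
  have hgrp : ∀ g : ι, ∑ i ∈ univ.filter (fun j => grp j = g), (b i - v i) * (u i - w i) ≤
      lam₁ * grpNorm grp g u - lam₁ * grpNorm grp g w := by
    intro g
    refine core_ineq (univ.filter fun j => grp j = g) b u w v lam₁
      (stCoef (univ : Finset (Fin q)) v lam₂) hlam₁ hc ?_ ?_
    · intro i hi
      exact groupST_eq grp lam₁ b g i (by simpa using hi)
    · intro i _; exact hw i
  have hsplit : ∑ i, (b i - v i) * (u i - w i) =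
      ∑ g : ι, ∑ i ∈ univ.filter (fun j => grp j = g), (b i - v i) * (u i - w i) :=
    (Finset.sum_fiberwise univ grp _).symm
  have hgsum : ∑ i, (b i - v i) * (u i - w i) ≤
      ∑ g : ι, lam₁ * grpNorm grp g u - ∑ g : ι, lam₁ * grpNorm grp g w := by
    rw [hsplit, ← Finset.sum_sub_distrib]
    exact Finset.sum_le_sum fun g _ => hgrp g
  have main : ∑ i, (b i - w i) * (u i - w i) ≤
      (lam₂ * Real.sqrt (∑ i, (u i)^2) - lam₂ * Real.sqrt (∑ i, (w i)^2)) +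
      (∑ g : ι, lam₁ * grpNorm grp g u - ∑ g : ι, lam₁ * grpNorm grp g w) := by
    have hs : ∑ i, (b i - w i) * (u i - w i)
        = ∑ i, (b i - v i) * (u i - w i) + ∑ i, (v i - w i) * (u i - w i) := by
      rw [← Finset.sum_add_distrib]
      exact Finset.sum_congr rfl fun i _ => by ring
    rw [hs]; linarith
  have expand : ∑ i, (u i - b i)^2 + 2 * ∑ i, (b i - w i) * (u i - w i)
      = ∑ i, (w i - b i)^2 + ∑ i, (u i - w i)^2 := by
    rw [Finset.mul_sum, ← Finset.sum_add_distrib, ← Finset.sum_add_distrib]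
    exact Finset.sum_congr rfl fun i _ => by ring
  unfold hierObj
  linarith

/-- The proximal operator of the two-level tree-structured hierarchical group norm
`ψ(z) = λ₂‖z‖₂ + ∑_{g ∈ G₁} λ₁‖z_g‖₂` is the composition of group soft-thresholding from
the leaves to the root: first threshold each group of the partition `G₁` with `λ₁`, then
threshold the whole resulting vector with `λ₂`. -/
theorem stmt_19 (grp : Fin q → ι) (lam₁ lam₂ : ℝ) (hlam₁ : 0 ≤ lam₁) (hlam₂ : 0 ≤ lam₂)
    (b : Fin q → ℝ) :
    (∀ u : Fin q → ℝ,
        hierObj grp lam₁ lam₂ b (rootST lam₂ (groupST grp lam₁ b)) ≤ hierObj grp lam₁ lam₂ b u) ∧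
    (∀ u : Fin q → ℝ,
        hierObj grp lam₁ lam₂ b u = hierObj grp lam₁ lam₂ b (rootST lam₂ (groupST grp lam₁ b)) →
        u = rootST lam₂ (groupST grp lam₁ b)) := by
  constructor
  · intro u
    have h := key_ineq grp lam₁ lam₂ hlam₁ hlam₂ b u
    have hnn : 0 ≤ ∑ i, (u i - rootST lam₂ (groupST grp lam₁ b) i)^2 :=
      Finset.sum_nonneg fun i _ => sq_nonneg _
    linarith
  · intro u hu
    have h := key_ineq grp lam₁ lam₂ hlam₁ hlam₂ b u
    have hnn : 0 ≤ ∑ i, (u i - rootST lam₂ (groupST grp lam₁ b) i)^2 :=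
      Finset.sum_nonneg fun i _ => sq_nonneg _
    have hz : ∑ i, (u i - rootST lam₂ (groupST grp lam₁ b) i)^2 = 0 := by linarith
    funext i
    have := (Finset.sum_eq_zero_iff_of_nonneg (fun i _ => sq_nonneg _)).mp hz i (mem_univ i)
    have := pow_eq_zero_iff (n := 2) (by norm_num) |>.mp this
    linarith
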